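/- arXiv:0901.0143 — 2 statements merged into one kernel-verified Lean document; each statement's English description precedes it below -/
import Mathlib

section
/- Let D be a self-adjoint operator on a Hilbert space H and for u ∈ ℝ define the weighted kernel condition: s ∈ Ker_{e^{uθ}}(T) iff e^{-uθ}s ∈ L² and Ts = 0, in the abstract model H = L²(ℝ, μ) ⊗ L²([0,∞)) with T = ∂_r + λ (multiplication by the spectral variable λ on the first factor). Then a formal solution s(λ,r) = ζ(λ)e^{-λr} satisfies e^{-ur}s ∈ L²(μ ⊗ dr) for all u > 0 if and only if ζ is supported (μ-a.e.) in [0, ∞). Consequently ∩_{u>0} Ker_{e^{ur}L²}(∂_r + λ) consists exactly of solutions whose spectral data is supported on the nonnegative half-line. -/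
open MeasureTheory
open scoped ENNReal

private lemma aux_nnnorm_eq (ζ : ℝ → ℂ) (u : ℝ) (p : ℝ × ℝ) :
    (‖ζ p.1 * Complex.exp (-((((p.1 + u) * p.2 : ℝ)) : ℂ))‖₊ : ℝ≥0∞) ^ (2 : ℕ)
      = (‖ζ p.1‖₊ : ℝ≥0∞) ^ (2 : ℕ)
        * ENNReal.ofReal (Real.exp (-(2 * (p.1 + u)) * p.2)) := by
  have h1 : ‖Complex.exp (-((((p.1 + u) * p.2 : ℝ)) : ℂ))‖
      = Real.exp (-((p.1 + u) * p.2)) := by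
    rw [Complex.norm_exp]
    simp
  have h2 : (‖ζ p.1 * Complex.exp (-((((p.1 + u) * p.2 : ℝ)) : ℂ))‖₊ : ℝ≥0∞)
      = ENNReal.ofReal (‖ζ p.1‖ * Real.exp (-((p.1 + u) * p.2))) := by
    rw [← enorm_eq_nnnorm, ← ofReal_norm_eq_enorm, norm_mul, h1]
  rw [h2, ← ENNReal.ofReal_pow (by positivity), mul_pow, ← Real.exp_nat_mul,
    ENNReal.ofReal_mul (by positivity), ← enorm_eq_nnnorm, ← ofReal_norm_eq_enorm,
    ← ENNReal.ofReal_pow (norm_nonneg _)]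
  ring_nf

/-- Characterization of extended solutions on a cylinder after the Browder–Gårding
diagonalization: a formal solution `s(λ,r) = ζ(λ)e^{-λr}` of `(∂_r + λ)s = 0` lies
in every weighted space `e^{ur}L²(μ ⊗ dr)` for `u > 0` (i.e. `e^{-ur}s ∈ L²` for all
`u > 0`) if and only if the spectral data `ζ` is supported `μ`-a.e. in `[0,∞)`. -/
theorem extended_solutions_iff_nonneg_support
    (μ : Measure ℝ) [SigmaFinite μ] (ζ : ℝ → ℂ) (hζ : MemLp ζ 2 μ) :
    (∀ u : ℝ, 0 < u →
        MemLp (fun p : ℝ × ℝ => ζ p.1 * Complex.exp (-((((p.1 + u) * p.2 : ℝ)) : ℂ))) 2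
          (μ.prod (volume.restrict (Set.Ici (0:ℝ))))) ↔
      (∀ᵐ l ∂μ, l < 0 → ζ l = 0) := by
  set ν : Measure (ℝ × ℝ) := μ.prod (volume.restrict (Set.Ici (0:ℝ))) with hν
  set f : ℝ → ℝ × ℝ → ℂ :=
    fun u p => ζ p.1 * Complex.exp (-((((p.1 + u) * p.2 : ℝ)) : ℂ)) with hf
  set I : ℝ → ℝ → ℝ≥0∞ :=
    fun u l => ∫⁻ r in Set.Ici (0:ℝ), ENNReal.ofReal (Real.exp (-(2 * (l + u)) * r)) with hI
  have h2 : ∀ x : ℝ≥0∞, x ^ ((2 : ℝ≥0∞).toReal) = x ^ (2 : ℕ) := fun x => by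
    rw [ENNReal.toReal_ofNat, ← ENNReal.rpow_natCast]; norm_num
  have hmeas : ∀ u : ℝ, AEStronglyMeasurable (f u) ν := by
    intro u
    exact (hζ.aestronglyMeasurable.comp_fst).mul
      ((Complex.continuous_exp.comp (continuous_neg.comp (Complex.continuous_ofReal.comp
        ((continuous_fst.add continuous_const).mul continuous_snd)))).aestronglyMeasurable)
  have hζfin : ∫⁻ l, (‖ζ l‖₊ : ℝ≥0∞) ^ (2 : ℕ) ∂μ < ⊤ := by
    have := lintegral_rpow_enorm_lt_top_of_eLpNorm_lt_top (f := ζ) two_ne_zero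
      ENNReal.ofNat_ne_top hζ.2
    simpa only [h2, enorm_eq_nnnorm] using this
  have htonelli : ∀ u : ℝ,
      ∫⁻ p, (‖f u p‖₊ : ℝ≥0∞) ^ (2 : ℕ) ∂ν
        = ∫⁻ l, (‖ζ l‖₊ : ℝ≥0∞) ^ (2 : ℕ) * I u l ∂μ := by
    intro u
    rw [hν, MeasureTheory.lintegral_prod (f := fun p => (‖f u p‖₊ : ℝ≥0∞) ^ (2 : ℕ)) (((hmeas u).enorm).pow_const 2)]
    refine lintegral_congr fun l => ?_
    rw [hI]
    rw [← lintegral_const_mul' _ _ (ENNReal.pow_ne_top ENNReal.coe_ne_top)]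
    exact lintegral_congr fun r => aux_nnnorm_eq ζ u (l, r)
  have hiff : ∀ u : ℝ, MemLp (f u) 2 ν ↔
      ∫⁻ l, (‖ζ l‖₊ : ℝ≥0∞) ^ (2 : ℕ) * I u l ∂μ < ⊤ := by
    intro u
    rw [← htonelli u]
    constructor
    · intro h
      have := lintegral_rpow_enorm_lt_top_of_eLpNorm_lt_top (f := f u) two_ne_zero
        ENNReal.ofNat_ne_top h.2
      simpa only [h2, enorm_eq_nnnorm] using this
    · intro h
      refine ⟨hmeas u, ?_⟩
      rw [eLpNorm_lt_top_iff_lintegral_rpow_enorm_lt_top two_ne_zero ENNReal.ofNat_ne_top]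
      simpa only [h2, enorm_eq_nnnorm] using h
  constructor
  · -- forward direction
    intro H
    have key : ∀ n : ℕ, ∀ᵐ l ∂μ, l ≤ -(1 / (n + 1 : ℝ)) → ζ l = 0 := by
      intro n
      set u : ℝ := 1 / (n + 1 : ℝ) with hu
      have hu0 : 0 < u := by positivity
      have hfin := (hiff u).1 (H u hu0)
      have hIm : Measurable fun l => I u l := by
        apply Measurable.lintegral_prod_right'
          (f := fun q : ℝ × ℝ => ENNReal.ofReal (Real.exp (-(2 * (q.1 + u)) * q.2)))
        exact (Real.continuous_exp.comp
          (((continuous_const.mul (continuous_fst.add continuous_const)).neg).mul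
            continuous_snd)).measurable.ennreal_ofReal
      have hae : ∀ᵐ l ∂μ, (‖ζ l‖₊ : ℝ≥0∞) ^ (2 : ℕ) * I u l < ⊤ :=
        ae_lt_top' (((hζ.aestronglyMeasurable.enorm).pow_const 2).mul hIm.aemeasurable)
          hfin.ne
      filter_upwards [hae] with l hl hle
      by_contra hne
      have hIl : I u l = ⊤ := by
        have hbound : ∀ r ∈ Set.Ici (0:ℝ),
            (1 : ℝ≥0∞) ≤ ENNReal.ofReal (Real.exp (-(2 * (l + u)) * r)) := by
          intro r hr
          rw [← ENNReal.ofReal_one]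
          exact ENNReal.ofReal_le_ofReal (by
            rw [← Real.exp_zero]
            exact Real.exp_le_exp.2 (by nlinarith [Set.mem_Ici.1 hr]))
        have : volume (Set.Ici (0:ℝ)) ≤ I u l := by
          rw [hI]
          calc volume (Set.Ici (0:ℝ))
              = ∫⁻ _ in Set.Ici (0:ℝ), (1 : ℝ≥0∞) := by
                simp [Measure.restrict_apply MeasurableSet.univ]
            _ ≤ _ := by
                refine lintegral_mono_ae ?_
                filter_upwards [ae_restrict_mem measurableSet_Ici] with r hr
                exact hbound r hr
        rw [Real.volume_Ici] at this
        exact top_le_iff.1 this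
      rw [hIl, ENNReal.mul_top] at hl
      · exact absurd hl (lt_irrefl _)
      · simpa [pow_eq_zero_iff] using hne
    filter_upwards [ae_all_iff.2 key] with l hl hl0
    obtain ⟨n, hn⟩ := exists_nat_one_div_lt (neg_pos.2 hl0)
    exact hl n (by linarith)
  · -- reverse direction
    intro hsupp u hu0
    rw [hiff u]
    set C : ℝ≥0∞ := ∫⁻ r in Set.Ici (0:ℝ), ENNReal.ofReal (Real.exp (-(2 * u) * r)) with hC
    have hCfin : C < ⊤ := by
      have hint : IntegrableOn (fun r : ℝ => Real.exp (-(2 * u) * r)) (Set.Ici (0:ℝ)) := by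
        rw [integrableOn_Ici_iff_integrableOn_Ioi]
        exact exp_neg_integrableOn_Ioi 0 (by linarith)
      have := (hasFiniteIntegral_iff_ofReal
        (Filter.Eventually.of_forall fun r => (Real.exp_pos _).le)).1 hint.2
      exact this
    have hbound : ∀ᵐ l ∂μ,
        (‖ζ l‖₊ : ℝ≥0∞) ^ (2 : ℕ) * I u l ≤ (‖ζ l‖₊ : ℝ≥0∞) ^ (2 : ℕ) * C := by
      filter_upwards [hsupp] with l hl
      rcases lt_or_ge l 0 with h | h
      · simp [hl h]
      · refine mul_le_mul_right ?_ _
        rw [hI, hC]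
        refine lintegral_mono_ae ?_
        filter_upwards [ae_restrict_mem measurableSet_Ici] with r hr
        exact ENNReal.ofReal_le_ofReal
          (Real.exp_le_exp.2 (by nlinarith [Set.mem_Ici.1 hr]))
    calc ∫⁻ l, (‖ζ l‖₊ : ℝ≥0∞) ^ (2 : ℕ) * I u l ∂μ
        ≤ ∫⁻ l, (‖ζ l‖₊ : ℝ≥0∞) ^ (2 : ℕ) * C ∂μ := lintegral_mono_ae hbound
      _ = (∫⁻ l, (‖ζ l‖₊ : ℝ≥0∞) ^ (2 : ℕ) ∂μ) * C := lintegral_mul_const' _ _ hCfin.ne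
      _ < ⊤ := ENNReal.mul_lt_top hζfin hCfin
end

section
/- Let P be a self-adjoint operator on L²(X;E) with finite propagation speed c (i.e., supp(e^{itP}ξ) ⊆ B(supp(ξ), c|t|) for all ξ ∈ L² and t ∈ ℝ). Let f ∈ S(ℝ) be a Schwartz function, ξ supported in the ball B(x, r), and R > r. Then ‖f(P)ξ‖_{L²(X∖B(x,R))} ≤ (2π)^{-1/2} ‖ξ‖_{L²(X)} ∫_{ℝ∖I_R} |f̂(s)| ds, where I_R = (−(R−r)/c, (R−r)/c) and f̂ is the Fourier transform of f. -/
open MeasureTheory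

/-- The Cheeger–Gromov–Taylor basic estimate.  Let `P` be a self-adjoint operator with
finite propagation speed `c` (the unitary wave group `U t = e^{itP}` does not enlarge
supports by more than `c|t|`, supports being measured through a family of localization
projections `χ_A`), let `f` be Schwartz with Fourier transform `f̂`, and let `ξ` be
supported in the ball `B(x,r)`.  Then for `R > r`,
`‖f(P)ξ‖_{L²(X∖B(x,R))} ≤ (2π)^{-1/2} ‖ξ‖ ∫_{ℝ∖I_R} |f̂(s)| ds`,
where `I_R = (−(R−r)/c, (R−r)/c)` and `f(P)ξ = (2π)^{-1/2} ∫ f̂(s) e^{isP} ξ ds`. -/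
theorem cheeger_gromov_taylor_basic_estimate
    {X : Type*} [PseudoMetricSpace X]
    {H : Type*} [NormedAddCommGroup H] [InnerProductSpace ℂ H] [CompleteSpace H]
    (χ : Set X → (H →L[ℂ] H))
    (hproj : ∀ A : Set X, χ A * χ A = χ A)
    (hnorm : ∀ A : Set X, ‖χ A‖ ≤ 1)
    (hmono : ∀ A B : Set X, A ⊆ B → χ B ∘L χ A = χ A)
    (hdisj : ∀ A B : Set X, Disjoint A B → χ A ∘L χ B = 0)
    (U : ℝ → (H →L[ℂ] H))
    (hU0 : U 0 = 1)
    (hUgrp : ∀ s t : ℝ, U (s + t) = U s ∘L U t)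
    (hUiso : ∀ (t : ℝ) (ξ : H), ‖U t ξ‖ = ‖ξ‖)
    (c : ℝ) (hc : 0 < c)
    (hprop : ∀ (t : ℝ) (A : Set X) (ξ : H), χ A ξ = ξ →
      χ (Metric.cthickening (c * |t|) A) (U t ξ) = U t ξ)
    (f : SchwartzMap ℝ ℂ) (fhat : ℝ → ℂ)
    (hfhat : ∀ s : ℝ, fhat s =
      (Real.sqrt (2 * Real.pi))⁻¹ • ∫ x : ℝ, f x * Complex.exp (-(((s * x : ℝ)) : ℂ) * Complex.I))
    (x : X) (r R : ℝ) (hr : 0 < r) (hrR : r < R)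
    (ξ : H) (hξ : χ (Metric.ball x r) ξ = ξ)
    (hint : Integrable (fun s : ℝ => fhat s • U s ξ))
    (hint2 : Integrable fhat)
    (fPξ : H)
    (hfP : fPξ = (Real.sqrt (2 * Real.pi))⁻¹ • ∫ s : ℝ, fhat s • U s ξ) :
    ‖χ ((Metric.ball x R)ᶜ) fPξ‖ ≤
      (Real.sqrt (2 * Real.pi))⁻¹ * ‖ξ‖ *
        ∫ s in (Set.Ioo (-((R - r) / c)) ((R - r) / c))ᶜ, ‖fhat s‖ := by
  set δ : ℝ := (R - r) / c with hδdef
  have hδpos : 0 < δ := div_pos (by linarith) hc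
  set I : Set ℝ := Set.Ioo (-δ) δ with hIdef
  set B : Set X := (Metric.ball x R)ᶜ with hBdef
  -- key vanishing on I
  have hkey : ∀ s ∈ I, χ B (fhat s • U s ξ) = 0 := by
    intro s hs
    have habs : c * |s| < R - r := by
      have h1 : |s| < δ := abs_lt.2 ⟨hs.1, hs.2⟩
      have := (mul_lt_mul_iff_right₀ hc).2 h1
      calc c * |s| < c * δ := this
        _ = R - r := by rw [hδdef]; field_simp
    have hA : χ (Metric.cthickening (c * |s|) (Metric.ball x r)) (U s ξ) = U s ξ :=
      hprop s _ ξ hξ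
    have hsub : Metric.cthickening (c * |s|) (Metric.ball x r) ⊆ Metric.ball x R := by
      set δ' : ℝ := (c * |s| + (R - r)) / 2 with hδ'def
      have h0 : 0 ≤ c * |s| := mul_nonneg hc.le (abs_nonneg s)
      have hδ'pos : 0 < δ' := by rw [hδ'def]; linarith
      have h1 : c * |s| < δ' := by rw [hδ'def]; linarith
      have h2 : δ' + r < R := by rw [hδ'def]; linarith
      intro y hy
      obtain ⟨z, hz, hyz⟩ := Set.mem_iUnion₂.1
        (Metric.cthickening_subset_iUnion_closedBall_of_lt _ hδ'pos h1 hy)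
      have : dist y x ≤ dist y z + dist z x := dist_triangle y z x
      have hzx : dist z x < r := Metric.mem_ball.1 hz
      have hyz' : dist y z ≤ δ' := Metric.mem_closedBall.1 hyz
      exact Metric.mem_ball.2 (by linarith)
    have hd : Disjoint B (Metric.cthickening (c * |s|) (Metric.ball x r)) := by
      rw [hBdef]
      exact Set.disjoint_compl_left_iff_subset.2 hsub
    have : χ B (U s ξ) = 0 := by
      calc χ B (U s ξ) = χ B (χ (Metric.cthickening (c * |s|) (Metric.ball x r)) (U s ξ)) := by
            rw [hA]
        _ = (χ B ∘L χ (Metric.cthickening (c * |s|) (Metric.ball x r))) (U s ξ) := rfl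
        _ = 0 := by rw [hdisj _ _ hd]; rfl
    rw [(χ B).map_smul, this, smul_zero]
  have c2π : (0:ℝ) ≤ (Real.sqrt (2 * Real.pi))⁻¹ := by positivity
  -- push χ B inside the integral
  have hcomm : χ B (∫ s : ℝ, fhat s • U s ξ) = ∫ s : ℝ, χ B (fhat s • U s ξ) :=
    (ContinuousLinearMap.integral_comp_comm (χ B) hint).symm
  have hχint : Integrable (fun s : ℝ => χ B (fhat s • U s ξ)) :=
    (χ B).integrable_comp hint
  -- restrict to Iᶜ
  have hrestrict : (∫ s : ℝ, χ B (fhat s • U s ξ)) = ∫ s in Iᶜ, χ B (fhat s • U s ξ) :=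
    (setIntegral_eq_integral_of_forall_compl_eq_zero
      (fun s hs => hkey s (not_not.mp hs))).symm
  have hnormbound : ∀ s : ℝ, ‖χ B (fhat s • U s ξ)‖ ≤ ‖fhat s‖ * ‖ξ‖ := by
    intro s
    calc ‖χ B (fhat s • U s ξ)‖ ≤ ‖χ B‖ * ‖fhat s • U s ξ‖ := (χ B).le_opNorm _
      _ ≤ 1 * ‖fhat s • U s ξ‖ := by
          apply mul_le_mul_of_nonneg_right (hnorm B) (norm_nonneg _)
      _ = ‖fhat s‖ * ‖ξ‖ := by rw [one_mul, norm_smul, hUiso]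
  rw [hfP, (χ B).map_smul_of_tower, norm_smul, hcomm, hrestrict]
  have hn : ‖(Real.sqrt (2 * Real.pi))⁻¹‖ = (Real.sqrt (2 * Real.pi))⁻¹ :=
    Real.norm_of_nonneg c2π
  rw [hn, mul_assoc]
  apply mul_le_mul_of_nonneg_left _ c2π
  calc ‖∫ s in Iᶜ, χ B (fhat s • U s ξ)‖ ≤ ∫ s in Iᶜ, ‖χ B (fhat s • U s ξ)‖ :=
        norm_integral_le_integral_norm _
    _ ≤ ∫ s in Iᶜ, ‖fhat s‖ * ‖ξ‖ := by
        apply integral_mono_of_nonneg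
        · exact Filter.Eventually.of_forall fun s => norm_nonneg _
        · exact (hint2.norm.mul_const ‖ξ‖).integrableOn
        · exact Filter.Eventually.of_forall fun s => hnormbound s
    _ = ‖ξ‖ * ∫ s in Iᶜ, ‖fhat s‖ := by
        rw [integral_mul_const, mul_comm]
end
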